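/- Let φ: ℝⁿ → ℝ have L-Lipschitz gradient and f satisfy |f(x) - φ(x)| ≤ ε_f for all x. Let u_1, ..., u_n ∈ ℝⁿ with ‖u_i‖ ≤ 1 for each i, and let Q be the n×n matrix whose rows are the u_i, assumed nonsingular. Define g(x) as the solution of the linear interpolation system σ Q g = F, where F ∈ ℝⁿ has entries F_i = f(x + σ u_i) - f(x). Then ‖g(x) - ∇φ(x)‖ ≤ ‖Q⁻¹‖ (√n L σ / 2 + 2 √n ε_f / σ) for all x, where ‖Q⁻¹‖ denotes the operator 2-norm. -/

import Mathlib

/-!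
Each divided difference `(f (x + σ uᵢ) - f x) / σ` is within `L σ / 2 + 2 ε_f / σ` of
`⟪∇φ x, uᵢ⟫`: the quadratic Taylor bound for a function with `L`-Lipschitz gradient accounts
for `L σ / 2`, the noise in the two evaluations of `f` for `2 ε_f / σ`. Since `Q (∇φ x)` is the
vector of the inner products `⟪∇φ x, uᵢ⟫`, the error `g x - ∇φ x` is `Q⁻¹` applied to the vector
of these discrepancies, whose Euclidean norm is at most `√n` times the entrywise bound.
-/

open InnerProductSpace Set Matrix

section Taylor

variable {E F : Type*} [NormedAddCommGroup E] [NormedSpace ℝ E]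
  [NormedAddCommGroup F] [NormedSpace ℝ F]

theorem norm_sub_sub_fderiv_le_of_lipschitz {φ : E → F} {φ' : E → E →L[ℝ] F} {L : ℝ}
    (hφ : ∀ x, HasFDerivAt φ (φ' x) x) (hlip : ∀ x y, ‖φ' x - φ' y‖ ≤ L * ‖x - y‖)
    (x v : E) : ‖φ (x + v) - φ x - φ' x v‖ ≤ L / 2 * ‖v‖ ^ 2 := by
  let r : ℝ → F := fun t => φ (x + t • v) - φ x - t • φ' x v
  have hr : ∀ t, HasDerivAt r (φ' (x + t • v) v - φ' x v) t := by
    intro t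
    have hline : HasDerivAt (fun s : ℝ => x + s • v) v t := by
      simpa using ((hasDerivAt_id t).smul_const v).const_add x
    exact (((hφ _).comp_hasDerivAt t hline).sub_const (φ x)).sub
      (by simpa using (hasDerivAt_id t).smul_const (φ' x v))
  have hB : ∀ t, HasDerivAt (fun s : ℝ => L / 2 * s ^ 2 * ‖v‖ ^ 2) (L * t * ‖v‖ ^ 2) t := by
    intro t
    exact (((hasDerivAt_pow 2 t).const_mul (L / 2)).mul_const (‖v‖ ^ 2)).congr_deriv
      (by rw [show (2 : ℕ) - 1 = 1 from rfl]; push_cast; ring)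
  have hbound : ∀ t ∈ Ico (0 : ℝ) 1, ‖φ' (x + t • v) v - φ' x v‖ ≤ L * t * ‖v‖ ^ 2 := by
    rintro t ⟨ht, -⟩
    calc ‖φ' (x + t • v) v - φ' x v‖ = ‖(φ' (x + t • v) - φ' x) v‖ := rfl
      _ ≤ ‖φ' (x + t • v) - φ' x‖ * ‖v‖ := ContinuousLinearMap.le_opNorm _ _
      _ ≤ L * ‖t • v‖ * ‖v‖ := by
        gcongr
        simpa using hlip (x + t • v) x
      _ = L * t * ‖v‖ ^ 2 := by rw [norm_smul, Real.norm_of_nonneg ht]; ring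
  have := image_norm_le_of_norm_deriv_right_le_deriv_boundary
    (fun t _ => (hr t).continuousAt.continuousWithinAt) (fun t _ => (hr t).hasDerivWithinAt)
    (by simp [r]) hB hbound (right_mem_Icc.2 zero_le_one)
  simpa [r] using this

end Taylor

section Gradient

variable {E : Type*} [NormedAddCommGroup E] [InnerProductSpace ℝ E] [CompleteSpace E]

theorem abs_sub_sub_inner_gradient_le {φ : E → ℝ} {L : ℝ} (hφ : Differentiable ℝ φ)
    (hlip : ∀ x y, ‖gradient φ x - gradient φ y‖ ≤ L * ‖x - y‖) (x v : E) :
    |φ (x + v) - φ x - ⟪gradient φ x, v⟫_ℝ| ≤ L / 2 * ‖v‖ ^ 2 := by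
  have := norm_sub_sub_fderiv_le_of_lipschitz (φ' := fun x => toDual ℝ E (gradient φ x))
    (fun x => (hφ x).hasGradientAt)
    (fun x y => by rw [← map_sub, LinearIsometryEquiv.norm_map]; exact hlip x y) x v
  simpa using this

theorem abs_slope_sub_inner_gradient_le {φ f : E → ℝ} {L ε σ : ℝ} (hφ : Differentiable ℝ φ)
    (hlip : ∀ x y, ‖gradient φ x - gradient φ y‖ ≤ L * ‖x - y‖) (hf : ∀ x, |f x - φ x| ≤ ε)
    (hσ : 0 < σ) (x u : E) :
    |(f (x + σ • u) - f x) / σ - ⟪gradient φ x, u⟫_ℝ| ≤ L * σ * ‖u‖ ^ 2 / 2 + 2 * ε / σ := by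
  have htaylor := abs_sub_sub_inner_gradient_le hφ hlip x (σ • u)
  rw [real_inner_smul_right, norm_smul, Real.norm_of_nonneg hσ.le] at htaylor
  have hnoise : |(f (x + σ • u) - f x) - (φ (x + σ • u) - φ x)| ≤ 2 * ε := by
    have := abs_sub (f (x + σ • u) - φ (x + σ • u)) (f x - φ x)
    rw [sub_sub_sub_comm] at this
    linarith [hf (x + σ • u), hf x]
  rw [← mul_le_mul_iff_of_pos_left hσ, ← abs_of_pos hσ, ← abs_mul, abs_of_pos hσ]
  calc |σ * ((f (x + σ • u) - f x) / σ - ⟪gradient φ x, u⟫_ℝ)|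
      = |((f (x + σ • u) - f x) - (φ (x + σ • u) - φ x)) +
          (φ (x + σ • u) - φ x - σ * ⟪gradient φ x, u⟫_ℝ)| := by
        congr 1; field_simp; ring
    _ ≤ 2 * ε + L / 2 * (σ * ‖u‖) ^ 2 := (abs_add_le _ _).trans (add_le_add hnoise htaylor)
    _ = σ * (L * σ * ‖u‖ ^ 2 / 2 + 2 * ε / σ) := by field_simp; ring

end Gradient

theorem EuclideanSpace.norm_le_sqrt_card_mul {ι : Type*} [Fintype ι] {w : EuclideanSpace ℝ ι}
    {C : ℝ} (hw : ∀ i, |w i| ≤ C) : ‖w‖ ≤ √(Fintype.card ι) * C := by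
  rcases isEmpty_or_nonempty ι with hι | ⟨⟨i₀⟩⟩
  · simp [Subsingleton.elim w 0]
  have hC : 0 ≤ C := (abs_nonneg _).trans (hw i₀)
  calc ‖w‖ = √(∑ i, |w i| ^ 2) := by simp [EuclideanSpace.norm_eq]
    _ ≤ √(∑ _i : ι, C ^ 2) := by gcongr with i; exact hw i
    _ = √(Fintype.card ι) * C := by simp [Real.sqrt_mul, hC]

theorem Matrix.of_mulVec_eq_inner {m ι : Type*} [Fintype ι] (u : m → EuclideanSpace ℝ ι)
    (v : EuclideanSpace ℝ ι) : (Matrix.of fun i j => u i j) *ᵥ v = fun i => ⟪v, u i⟫_ℝ := by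
  ext i
  rw [EuclideanSpace.inner_eq_star_dotProduct, star_trivial]
  rfl

theorem Matrix.eq_toEuclideanLin_inv_of_mulVec_eq {𝕜 ι : Type*} [RCLike 𝕜] [Fintype ι]
    [DecidableEq ι] {A : Matrix ι ι 𝕜} (hA : IsUnit A.det) {v w : EuclideanSpace 𝕜 ι}
    (h : A *ᵥ WithLp.ofLp v = WithLp.ofLp w) : v = Matrix.toEuclideanLin A⁻¹ w := by
  rw [Matrix.toLpLin_apply, ← h, mulVec_mulVec, nonsing_inv_mul A hA, one_mulVec,
    WithLp.toLp_ofLp]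

theorem interpolation_error_bound_general (n : ℕ)
    (φ f : EuclideanSpace ℝ (Fin n) → ℝ)
    (L εf σ : ℝ) (hL : 0 ≤ L) (hσ : 0 < σ)
    (hφ : ContDiff ℝ 1 φ)
    (hlip : ∀ x y, ‖gradient φ x - gradient φ y‖ ≤ L * ‖x - y‖)
    (hf : ∀ x, |f x - φ x| ≤ εf)
    (u : Fin n → EuclideanSpace ℝ (Fin n)) (hu : ∀ i, ‖u i‖ ≤ 1)
    (Q : Matrix (Fin n) (Fin n) ℝ) (hQ : Q = Matrix.of fun i j => u i j)
    (hQinv : IsUnit Q.det)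
    (g : EuclideanSpace ℝ (Fin n) → EuclideanSpace ℝ (Fin n))
    (hg : ∀ x, σ • Q.mulVec (fun j => g x j) = fun i => f (x + σ • u i) - f x) :
    ∀ x, ‖g x - gradient φ x‖ ≤
      ‖LinearMap.toContinuousLinearMap (Matrix.toEuclideanLin Q⁻¹)‖ *
        (Real.sqrt n * L * σ / 2 + 2 * Real.sqrt n * εf / σ) := by
  intro x
  set G := gradient φ x
  let w : EuclideanSpace ℝ (Fin n) :=
    WithLp.toLp 2 fun i => (f (x + σ • u i) - f x) / σ - ⟪G, u i⟫_ℝ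
  have hw : ∀ i, |w i| ≤ L * σ / 2 + 2 * εf / σ := fun i =>
    (abs_slope_sub_inner_gradient_le (hφ.differentiable one_ne_zero) hlip hf hσ x (u i)).trans
      (by
        gcongr ?_ / 2 + _
        exact mul_le_of_le_one_right (by positivity) (pow_le_one₀ (norm_nonneg _) (hu i)))
  have hsolve : Q *ᵥ WithLp.ofLp (g x - G) = WithLp.ofLp w := by
    have hQG : Q *ᵥ WithLp.ofLp G = fun i => ⟪G, u i⟫_ℝ := hQ ▸ Matrix.of_mulVec_eq_inner u G
    ext i
    have hgi : σ * (Q *ᵥ WithLp.ofLp (g x)) i = f (x + σ • u i) - f x := congrFun (hg x) i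
    rw [WithLp.ofLp_sub, mulVec_sub, hQG, Pi.sub_apply]
    simp only [w, ← hgi]
    field_simp
  set M := LinearMap.toContinuousLinearMap (toEuclideanLin Q⁻¹)
  calc ‖g x - G‖ = ‖M w‖ := by rw [eq_toEuclideanLin_inv_of_mulVec_eq hQinv hsolve]; rfl
    _ ≤ ‖M‖ * ‖w‖ := M.le_opNorm w
    _ ≤ ‖M‖ * (√n * (L * σ / 2 + 2 * εf / σ)) := by
        gcongr
        simpa using EuclideanSpace.norm_le_sqrt_card_mul hw
    _ = _ := by ring

/-- Linear interpolation gradient approximation error bound (Theorem 3). -/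
theorem interpolation_error_bound (n : ℕ) (hn : 0 < n)
    (φ f : EuclideanSpace ℝ (Fin n) → ℝ)
    (L εf σ : ℝ) (hL : 0 ≤ L) (hε : 0 ≤ εf) (hσ : 0 < σ)
    (hφ : ContDiff ℝ 1 φ)
    (hlip : ∀ x y, ‖gradient φ x - gradient φ y‖ ≤ L * ‖x - y‖)
    (hf : ∀ x, |f x - φ x| ≤ εf)
    (u : Fin n → EuclideanSpace ℝ (Fin n)) (hu : ∀ i, ‖u i‖ ≤ 1)
    (Q : Matrix (Fin n) (Fin n) ℝ) (hQ : Q = Matrix.of fun i j => u i j)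
    (hQinv : IsUnit Q.det)
    (g : EuclideanSpace ℝ (Fin n) → EuclideanSpace ℝ (Fin n))
    (hg : ∀ x, σ • Q.mulVec (fun j => g x j) = fun i => f (x + σ • u i) - f x) :
    ∀ x, ‖g x - gradient φ x‖ ≤
      ‖LinearMap.toContinuousLinearMap (Matrix.toEuclideanLin Q⁻¹)‖ *
        (Real.sqrt n * L * σ / 2 + 2 * Real.sqrt n * εf / σ) :=
  interpolation_error_bound_general n φ f L εf σ hL hσ hφ hlip hf u hu Q hQ hQinv g hg
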